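/- arXiv:2311.03080 — 3 statements merged into one kernel-verified Lean document; each statement's English description precedes it below -/
import Mathlib

section
/- The polynomial q(x) = 4823x⁶ − 5915x⁴ + 1665x² − 61 has exactly six distinct real roots, all lying in the open interval (−1, 1), and the set of roots is symmetric about 0 (i.e., q(x)=0 implies q(−x)=0). -/
/-!
`q` is even. It changes sign on each of `(0, 3/10)`, `(1/2, 7/10)` and `(7/10, 1)`, which gives
three positive roots and, with their negatives, six distinct roots; degree six allows no more.
Substituting `x² = 1 + s` gives `q(x) = 4823s³ + 8554s² + 4304s + 512`, positive for `s ≥ 0`, so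
every root has `x² < 1`.
-/

open Polynomial Set

namespace Polynomial

variable {R : Type*} [CommRing R] [IsDomain R]

theorem setOf_eval_eq_zero_eq_rootSet {p : R[X]} (hp : p ≠ 0) :
    {x | p.eval x = 0} = p.rootSet R := by
  ext x
  simp [mem_rootSet_of_ne hp]

theorem ncard_setOf_eval_eq_zero_le {p : R[X]} (hp : p ≠ 0) :
    {x | p.eval x = 0}.ncard ≤ p.natDegree :=
  setOf_eval_eq_zero_eq_rootSet hp ▸ p.ncard_rootSet_le R

theorem exists_mem_Ioo_eval_eq_zero {p : ℝ[X]} {a b : ℝ} (hab : a ≤ b)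
    (h : p.eval a * p.eval b < 0) : ∃ x ∈ Ioo a b, p.eval x = 0 := by
  have hcont := p.continuous.continuousOn (s := Icc a b)
  rcases mul_neg_iff.mp h with ⟨ha, hb⟩ | ⟨ha, hb⟩
  · exact intermediate_value_Ioo' hab hcont ⟨hb, ha⟩
  · exact intermediate_value_Ioo hab hcont ⟨ha, hb⟩

end Polynomial

theorem ncard_pm_triple {α : Type*} [Ring α] [LinearOrder α] [IsStrictOrderedRing α]
    {a b c : α} (ha : 0 < a) (hab : a < b) (hbc : b < c) :
    ({a, b, c, -a, -b, -c} : Set α).ncard = 6 := by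
  have hb : 0 < b := ha.trans hab
  have hc : 0 < c := hb.trans hbc
  repeat rw [ncard_insert_of_notMem (by simp only [mem_insert_iff, mem_singleton_iff]; grind)]
  rw [ncard_singleton]

noncomputable def sextic : ℝ[X] :=
  C 4823 * X ^ 6 - C 5915 * X ^ 4 + C 1665 * X ^ 2 - C 61

theorem eval_sextic (x : ℝ) :
    sextic.eval x = 4823 * x ^ 6 - 5915 * x ^ 4 + 1665 * x ^ 2 - 61 := by
  simp [sextic]

theorem sextic_ne_zero : sextic ≠ 0 := fun h => by
  simpa [eval_sextic] using congrArg (eval 0) h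

theorem natDegree_sextic : sextic.natDegree = 6 := by
  unfold sextic
  compute_degree!

theorem eval_neg_sextic (x : ℝ) : sextic.eval (-x) = sextic.eval x := by
  simp only [eval_sextic]
  ring

theorem eval_sextic_pos_of_one_le_sq {x : ℝ} (hx : 1 ≤ x ^ 2) : 0 < sextic.eval x := by
  obtain ⟨s, hs, hxs⟩ : ∃ s, 0 ≤ s ∧ x ^ 2 = 1 + s := ⟨x ^ 2 - 1, by linarith, by ring⟩
  have key : sextic.eval x = 4823 * s ^ 3 + 8554 * s ^ 2 + 4304 * s + 512 := by
    rw [eval_sextic, show x ^ 6 = (x ^ 2) ^ 3 by ring, show x ^ 4 = (x ^ 2) ^ 2 by ring, hxs]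
    ring
  rw [key]
  positivity

theorem mem_Ioo_of_eval_sextic_eq_zero {x : ℝ} (hx : sextic.eval x = 0) : x ∈ Ioo (-1) 1 := by
  by_contra hmem
  have : 1 ≤ x ^ 2 := by
    rw [mem_Ioo, not_and_or, not_lt, not_lt] at hmem
    rcases hmem with h | h <;> nlinarith
  exact (eval_sextic_pos_of_one_le_sq this).ne' hx

theorem exists_three_pos_roots_sextic :
    ∃ a b c : ℝ, 0 < a ∧ a < b ∧ b < c ∧
      sextic.eval a = 0 ∧ sextic.eval b = 0 ∧ sextic.eval c = 0 := by
  obtain ⟨a, ⟨ha₀, ha⟩, hqa⟩ := exists_mem_Ioo_eval_eq_zero (p := sextic) (a := 0) (b := 3 / 10)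
    (by norm_num) (by norm_num [eval_sextic])
  obtain ⟨b, ⟨hb₀, hb⟩, hqb⟩ := exists_mem_Ioo_eval_eq_zero (p := sextic) (a := 1 / 2)
    (b := 7 / 10) (by norm_num) (by norm_num [eval_sextic])
  obtain ⟨c, ⟨hc₀, -⟩, hqc⟩ := exists_mem_Ioo_eval_eq_zero (p := sextic) (a := 7 / 10) (b := 1)
    (by norm_num) (by norm_num [eval_sextic])
  exact ⟨a, b, c, ha₀, by linarith, by linarith, hqa, hqb, hqc⟩

theorem ncard_setOf_eval_sextic_eq_zero : {x | sextic.eval x = 0}.ncard = 6 := by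
  obtain ⟨a, b, c, ha, hab, hbc, hqa, hqb, hqc⟩ := exists_three_pos_roots_sextic
  refine le_antisymm (natDegree_sextic ▸ ncard_setOf_eval_eq_zero_le sextic_ne_zero) ?_
  have hsub : ({a, b, c, -a, -b, -c} : Set ℝ) ⊆ {x | sextic.eval x = 0} := by
    simp [insert_subset_iff, eval_neg_sextic, hqa, hqb, hqc]
  exact ncard_pm_triple ha hab hbc ▸ ncard_le_ncard hsub (finite_setOfPred_isRoot sextic_ne_zero)

/-- The polynomial `q(x) = 4823x⁶ − 5915x⁴ + 1665x² − 61` has exactly six distinct real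
roots, all lying in `(−1, 1)`, and the set of roots is symmetric about `0`. -/
theorem roots_sextic_p9 :
    {x : ℝ | 4823 * x ^ 6 - 5915 * x ^ 4 + 1665 * x ^ 2 - 61 = 0}.ncard = 6 ∧
    (∀ x : ℝ, 4823 * x ^ 6 - 5915 * x ^ 4 + 1665 * x ^ 2 - 61 = 0 →
      x ∈ Set.Ioo (-1 : ℝ) 1) ∧
    (∀ x : ℝ, 4823 * x ^ 6 - 5915 * x ^ 4 + 1665 * x ^ 2 - 61 = 0 →
      4823 * (-x) ^ 6 - 5915 * (-x) ^ 4 + 1665 * (-x) ^ 2 - 61 = 0) := by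
  simp only [← eval_sextic]
  exact ⟨ncard_setOf_eval_sextic_eq_zero, fun _ => mem_Ioo_of_eval_sextic_eq_zero,
    fun x hx => (eval_neg_sextic x).trans hx⟩
end

section
/- For the polynomial q(x) = 4823x⁶ − 5915x⁴ + 1665x² − 61, the substitution t = x² yields a cubic 4823t³ − 5915t² + 1665t − 61 that has three distinct real roots, all lying in the open interval (0, 1). -/
/-! The cubic is negative at `0`, positive at `1/10`, negative at `1/2` and positive at `1`, so the
intermediate value theorem gives a root in each of `(0, 1/10)`, `(1/10, 1/2)` and `(1/2, 1)`;
a nonzero cubic has at most three roots, so these are all of them. -/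

open Polynomial Set

theorem exists_mem_Ioo_eq_zero_of_mul_neg {f : ℝ → ℝ} {a b : ℝ} (hab : a ≤ b)
    (hf : ContinuousOn f (Icc a b)) (h : f a * f b < 0) : ∃ c ∈ Ioo a b, f c = 0 := by
  rcases lt_or_gt_of_ne (left_ne_zero_of_mul h.ne) with ha | ha
  · exact intermediate_value_Ioo hab hf ⟨ha, pos_of_mul_neg_right h ha.le⟩
  · exact intermediate_value_Ioo' hab hf ⟨neg_of_mul_neg_right h ha.le, ha⟩

theorem Polynomial.exists_mem_Ioo_isRoot_of_mul_neg (p : ℝ[X]) {a b : ℝ} (hab : a ≤ b)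
    (h : p.eval a * p.eval b < 0) : ∃ c ∈ Ioo a b, p.IsRoot c :=
  exists_mem_Ioo_eq_zero_of_mul_neg hab p.continuous.continuousOn h

theorem Polynomial.ncard_setOf_isRoot_le {R : Type*} [CommRing R] [IsDomain R] {p : R[X]}
    (hp : p ≠ 0) : {x | p.IsRoot x}.ncard ≤ p.natDegree := by
  classical
  have hset : {x | p.IsRoot x} = ↑p.roots.toFinset := by
    ext x
    simp [mem_roots hp]
  rw [hset, ncard_coe_finset]
  exact (Multiset.toFinset_card_le _).trans p.card_roots'

theorem Set.eq_insert_insert_singleton_of_ncard_le_three {α : Type*} {s : Set α} {a b c : α}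
    (hs : s.Finite) (h3 : s.ncard ≤ 3) (ha : a ∈ s) (hb : b ∈ s) (hc : c ∈ s)
    (hab : a ≠ b) (hac : a ≠ c) (hbc : b ≠ c) : {a, b, c} = s := by
  have habc : ({a, b, c} : Set α).ncard = 3 := ncard_eq_three.mpr ⟨a, b, c, hab, hac, hbc, rfl⟩
  exact eq_of_subset_of_ncard_le (insert_subset ha (insert_subset hb (singleton_subset_iff.mpr hc)))
    (habc ▸ h3) hs

theorem Polynomial.setOf_isRoot_eq_of_natDegree_le_three {R : Type*} [CommRing R] [IsDomain R]
    {p : R[X]} {a b c : R} (hp : p ≠ 0) (hdeg : p.natDegree ≤ 3) (ha : p.IsRoot a)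
    (hb : p.IsRoot b) (hc : p.IsRoot c) (hab : a ≠ b) (hac : a ≠ c) (hbc : b ≠ c) :
    {x | p.IsRoot x} = {a, b, c} :=
  (eq_insert_insert_singleton_of_ncard_le_three (finite_setOfPred_isRoot hp)
    ((ncard_setOf_isRoot_le hp).trans hdeg) ha hb hc hab hac hbc).symm

noncomputable def cubic : ℝ[X] := C 4823 * X ^ 3 - C 5915 * X ^ 2 + C 1665 * X - C 61

theorem eval_cubic (t : ℝ) : cubic.eval t = 4823 * t ^ 3 - 5915 * t ^ 2 + 1665 * t - 61 := by
  simp [cubic]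

theorem cubic_ne_zero : cubic ≠ 0 := fun h => by
  simpa [eval_cubic] using congrArg (eval 0) h

theorem natDegree_cubic : cubic.natDegree = 3 := by
  unfold cubic
  compute_degree!

/-- Under the substitution `t = x²`, the sextic `4823x⁶ − 5915x⁴ + 1665x² − 61` becomes the
cubic `4823t³ − 5915t² + 1665t − 61`, which has three distinct real roots, all in `(0, 1)`. -/
theorem roots_cubic_in_t :
    (∀ x : ℝ, 4823 * x ^ 6 - 5915 * x ^ 4 + 1665 * x ^ 2 - 61 =
      4823 * (x ^ 2) ^ 3 - 5915 * (x ^ 2) ^ 2 + 1665 * (x ^ 2) - 61) ∧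
    {t : ℝ | 4823 * t ^ 3 - 5915 * t ^ 2 + 1665 * t - 61 = 0}.ncard = 3 ∧
    ∀ t : ℝ, 4823 * t ^ 3 - 5915 * t ^ 2 + 1665 * t - 61 = 0 → t ∈ Set.Ioo (0 : ℝ) 1 := by
  have hS : {t : ℝ | 4823 * t ^ 3 - 5915 * t ^ 2 + 1665 * t - 61 = 0} = {t | cubic.IsRoot t} := by
    ext t
    simp [eval_cubic]
  obtain ⟨a, ha, ha0⟩ := cubic.exists_mem_Ioo_isRoot_of_mul_neg (a := 0) (b := 1 / 10)
    (by norm_num) (by norm_num [eval_cubic])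
  obtain ⟨b, hb, hb0⟩ := cubic.exists_mem_Ioo_isRoot_of_mul_neg (a := 1 / 10) (b := 1 / 2)
    (by norm_num) (by norm_num [eval_cubic])
  obtain ⟨c, hc, hc0⟩ := cubic.exists_mem_Ioo_isRoot_of_mul_neg (a := 1 / 2) (b := 1)
    (by norm_num) (by norm_num [eval_cubic])
  have hab : a ≠ b := (ha.2.trans hb.1).ne
  have hac : a ≠ c := (ha.2.trans (by norm_num) |>.trans hc.1).ne
  have hbc : b ≠ c := (hb.2.trans hc.1).ne
  have hroots : {t | cubic.IsRoot t} = {a, b, c} :=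
    setOf_isRoot_eq_of_natDegree_le_three cubic_ne_zero natDegree_cubic.le ha0 hb0 hc0 hab hac hbc
  rw [hS, hroots, ncard_eq_three]
  refine ⟨fun x => by ring, ⟨a, b, c, hab, hac, hbc, rfl⟩, fun t ht => ?_⟩
  have ht' : t ∈ ({a, b, c} : Set ℝ) := hroots ▸ hS ▸ ht
  rcases ht' with rfl | rfl | rfl
  · exact ⟨ha.1, ha.2.trans (by norm_num)⟩
  · exact ⟨hb.1.trans' (by norm_num), hb.2.trans (by norm_num)⟩
  · exact ⟨hc.1.trans' (by norm_num), hc.2⟩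
end

section
/- For the spline space S_h^{p,3}([0,1]) with p = 7 (and likewise p = 8), no Greville point ζ_j = (t_{j+1} + … + t_{j+p})/p coincides with any inner knot j'/(k+1), j' = 1,…,k, for any number k ≥ 1 of inner knots. -/
/-- The open uniform knot vector of `S_h^{p,r}([0,1])`: end knots `0` and `1` of
multiplicity `p+1`, inner knots `j/(k+1)`, `j = 1,…,k`, each of multiplicity `p−r`. -/
noncomputable def knot (p r k : ℕ) (j : ℕ) : ℝ :=
  if j ≤ p then 0
  else if p + k * (p - r) < j then 1
  else (((j - p - 1) / (p - r) + 1 : ℕ) : ℝ) / (k + 1)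

/-- The Greville points `ζ_j = (t_{j+1} + … + t_{j+p})/p`. -/
noncomputable def greville (p r k : ℕ) (j : ℕ) : ℝ :=
  (∑ i ∈ Finset.range p, knot p r k (j + 1 + i)) / p

/-!
With `q = p - r`, `(k+1) t_n` counts the blocks `m ≤ k` of inner knots lying before `n`, so
exchanging the two sums gives `p (k+1) ζ_j = ∑_{m ≤ k} min(p, j - m q)`, while the inner knot
`j'/(k+1)` corresponds to the value `p j'`. Write `j = a q + b` with `b < q`. Since `p ≤ 2q`,
the terms with `m ≤ a - 2` all equal `p`, so the sum is `p (a-1) + min(p, q+b) + b`, the last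
summand missing when `a = k+1`. For `(p, q) = (7, 4)` and `(8, 5)` the residue
`min(p, q+b) + b` is never divisible by `p`, and the boundary cases `a = 0` and `a = k+1` give
values below `p` and above `p k` respectively.
-/

open Finset

lemma sum_range_ite_lt_add (N a b : ℕ) :
    (∑ i ∈ range N, if a < b + i then (1 : ℕ) else 0) = N - (a + 1 - b) := by
  induction N with
  | zero => simp
  | succ n ih => rw [sum_range_succ, ih]; split_ifs <;> omega

lemma sum_range_ite_lt (N D : ℕ) :
    (∑ m ∈ range N, if m < D then (1 : ℕ) else 0) = min N D := by
  induction N with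
  | zero => simp
  | succ n ih => rw [sum_range_succ, ih]; split_ifs <;> omega

section KnotVector

variable {p r k : ℕ}

lemma knot_eq_sum_ite (hr : r < p) (n : ℕ) :
    knot p r k n =
      ((∑ m ∈ range (k + 1), if p + m * (p - r) < n then (1 : ℕ) else 0 : ℕ) : ℝ) /
        (k + 1) := by
  have hq : 0 < p - r := by omega
  unfold knot
  split_ifs with hleft hright
  · rw [sum_eq_zero fun m _ => if_neg (by omega)]
    simp
  · have hall (m) (hm : m ∈ range (k + 1)) : p + m * (p - r) < n := by
      have : m * (p - r) ≤ k * (p - r) :=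
        Nat.mul_le_mul_right _ (Nat.lt_succ_iff.mp (mem_range.mp hm))
      omega
    rw [sum_congr rfl fun m hm => if_pos (hall m hm)]
    simp only [sum_const, card_range, smul_eq_mul, mul_one, Nat.cast_add, Nat.cast_one]
    exact (div_self (by positivity)).symm
  · have hiff (m) : p + m * (p - r) < n ↔ m < (n - p - 1) / (p - r) + 1 := by
      rw [Nat.lt_succ_iff, Nat.le_div_iff_mul_le hq]
      omega
    have hblock : (n - p - 1) / (p - r) ≤ k :=
      Nat.div_le_of_le_mul (by rw [Nat.mul_comm]; omega)
    rw [sum_congr rfl fun m _ => if_congr (hiff m) rfl rfl, sum_range_ite_lt,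
      min_eq_right (by omega)]

lemma greville_eq_sum_min (hr : r < p) (j : ℕ) :
    greville p r k j =
      ((∑ m ∈ range (k + 1), min p (j - m * (p - r)) : ℕ) : ℝ) / (p * (k + 1)) := by
  have hcount (m : ℕ) :
      (∑ i ∈ range p, if p + m * (p - r) < j + 1 + i then (1 : ℕ) else 0) =
        min p (j - m * (p - r)) := by
    rw [sum_range_ite_lt_add]
    omega
  unfold greville
  simp_rw [knot_eq_sum_ite hr, ← sum_div, ← Nat.cast_sum]
  rw [sum_comm]
  simp_rw [hcount]
  rw [div_div, mul_comm]

end KnotVector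

lemma sum_range_min_sub_mul {p q b N a : ℕ} (hqp : q ≤ p) (hp : p ≤ 2 * q) (hb : b < q)
    (ha : a ≤ N) :
    ∑ m ∈ range N, min p (a * q + b - m * q) =
      p * (a - 1) + (if 1 ≤ a then min p (q + b) else 0) + (if a < N then b else 0) := by
  induction N generalizing a with
  | zero => simp [Nat.le_zero.mp ha]
  | succ N ih =>
    rw [sum_range_succ']
    rcases a with _ | a
    · have hzero (m : ℕ) : min p (b - (m + 1) * q) = 0 := by
        have hq : q ≤ (m + 1) * q := Nat.le_mul_of_pos_left q m.succ_pos
        omega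
      simp only [zero_mul, zero_add, Nat.sub_zero, hzero, sum_const_zero]
      split_ifs <;> omega
    · have hshift (m : ℕ) : (a + 1) * q + b - (m + 1) * q = a * q + b - m * q := by
        simp only [Nat.add_mul, one_mul]
        omega
      simp_rw [hshift]
      rw [ih (by omega)]
      rcases a with _ | a
      · simp only [zero_mul, zero_add, Nat.zero_sub, mul_zero, one_mul]
        split_ifs <;> omega
      · have hfull : p ≤ (a + 1 + 1) * q := by nlinarith
        simp only [Nat.sub_zero, zero_mul, Nat.add_sub_cancel, mul_add, mul_one]
        split_ifs <;> omega

lemma sum_range_min_sub_mul_ne_mul {p q k j j' : ℕ} (hpq : p = 7 ∧ q = 4 ∨ p = 8 ∧ q = 5)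
    (hj : j ≤ p + k * q) (hj'₁ : 1 ≤ j') (hj'₂ : j' ≤ k) :
    ∑ m ∈ range (k + 1), min p (j - m * q) ≠ p * j' := by
  have hq : 0 < q := by omega
  have ha : j / q ≤ k + 1 := by
    rw [Nat.div_le_iff_le_mul_add_pred hq]
    obtain ⟨rfl, rfl⟩ | ⟨rfl, rfl⟩ := hpq <;> omega
  rw [← Nat.div_add_mod' j q,
    sum_range_min_sub_mul (by omega) (by omega) (Nat.mod_lt j hq) ha]
  obtain ⟨rfl, rfl⟩ | ⟨rfl, rfl⟩ := hpq <;> split_ifs <;> omega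

/-- For `S_h^{p,3}([0,1])` with `p = 7` or `p = 8`, no Greville point coincides with any
inner knot `j'/(k+1)`, for any number `k ≥ 1` of inner knots. -/
theorem greville_avoid_inner_knots :
    ∀ p ∈ ({7, 8} : Set ℕ), ∀ k : ℕ, 1 ≤ k →
      ∀ j < p + 1 + k * (p - 3), ∀ j' : ℕ, 1 ≤ j' → j' ≤ k →
        greville p 3 k j ≠ (j' : ℝ) / (k + 1) := by
  intro p hp k _ j hj j' hj'₁ hj'₂ hknot
  have hpq : p = 7 ∧ p - 3 = 4 ∨ p = 8 ∧ p - 3 = 5 := by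
    rcases hp with rfl | rfl <;> simp
  have hp₀ : (0 : ℝ) < p := Nat.cast_pos.mpr (by omega)
  rw [greville_eq_sum_min (by omega), div_eq_div_iff (by positivity) (by positivity)] at hknot
  have hsum :
      ((∑ m ∈ range (k + 1), min p (j - m * (p - 3)) : ℕ) : ℝ) = (p * j' : ℕ) := by
    rw [Nat.cast_mul]
    exact mul_right_cancel₀ (by positivity : ((k : ℝ) + 1) ≠ 0) (hknot.trans (by ring))
  exact sum_range_min_sub_mul_ne_mul hpq (by omega) hj'₁ hj'₂ (Nat.cast_injective hsum)
end
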